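/- Let V and W be locally convex real topological vector spaces whose topologies are induced by translation-invariant metrics d_V, d_W with balanced balls, and assume V is strict. For i ∈ ℕ let c(i) (resp. C(i)) be the closed convex hull of the ball of radius 2^{-i} around 0 in V (resp. W). Let TL(V,W) be the set of continuous linear maps A : V → W for which there exists r ∈ ℕ such that for every M ∈ ℕ there is C_M > 0 with A(c(M+r)) ⊆ C_M·C(M). For i,j ∈ ℕ set K_{i,j} := {A ∈ TL(V,W) : A(2^i·c(i)) ⊆ C(j)} and K_j := ⋃_{i∈ℕ} K_{i,j}. Then the sets 2^{-n}·K_j (n, j ∈ ℕ) form a neighborhood base at 0 of a Hausdorff, metrizable vector space topology on TL(V,W). -/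

import Mathlib

/-!
The sets `K_j` are balanced, absorb every tame map, and satisfy `K_{j+1} + K_{j+1} ⊆ K_j`
(translation invariance gives `2 • c(i+1) ⊆ c(i)`), so they form a string, and a string is a
basis at `0` of a vector space topology. The sets `2⁻ⁿ • K_j` give the same filter because
`2ⁿ • K_{j+n} ⊆ K_j`, and a countable basis at `0` yields metrizability. For the Hausdorff
property, strictness of `V` puts a fixed multiple `ε • v` into every `2ⁱ • c(i)`, so a map in
every `K_j` sends `ε • v` into every `C(j)`; by local convexity of `W` these shrink to `0`.
-/

open Pointwise

/-- The closed convex hull `c(i)` of the metric ball of radius `2⁻ⁱ` around `0`. -/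
def cHull (V : Type*) [AddCommGroup V] [Module ℝ V] [MetricSpace V]
    [IsTopologicalAddGroup V] [ContinuousSMul ℝ V] (i : ℕ) : Set V :=
  closure (convexHull ℝ (Metric.ball (0 : V) (2⁻¹ ^ i)))

section TameCLM

variable (V W : Type*)
    [AddCommGroup V] [Module ℝ V] [MetricSpace V] [IsTopologicalAddGroup V]
    [ContinuousSMul ℝ V]
    [AddCommGroup W] [Module ℝ W] [MetricSpace W] [IsTopologicalAddGroup W]
    [ContinuousSMul ℝ W]

variable {W} in
theorem cHull_balanced
    (hWballs : ∀ (r t : ℝ) (w : W), |t| ≤ 1 → dist w 0 < r → dist (t • w) 0 < r)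
    (M : ℕ) : Balanced ℝ (cHull W M) := by
  refine Balanced.closure (Balanced.convexHull ?_)
  intro a ha x hx
  rcases hx with ⟨y, hy, rfl⟩
  rw [Metric.mem_ball] at *
  simpa using hWballs _ a y (by simpa [Real.norm_eq_abs] using ha) (by simpa using hy)

variable {W} in
theorem cHull_convex (M : ℕ) : Convex ℝ (cHull W M) :=
  (convex_convexHull ℝ _).closure

variable {W} in
theorem cHull_anti {i j : ℕ} (h : i ≤ j) : cHull W j ⊆ cHull W i := by
  refine closure_mono (convexHull_mono (Metric.ball_subset_ball ?_))
  exact pow_le_pow_of_le_one (by norm_num) (by norm_num) h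

variable {W} in
theorem zero_mem_cHull (M : ℕ) : (0 : W) ∈ cHull W M :=
  subset_closure (subset_convexHull ℝ _ (Metric.mem_ball_self (by positivity)))

/-- The space `TL(V,W)` of tame continuous linear maps: those `A : V →L[ℝ] W` for which
there is an `r ∈ ℕ` such that for every `M` there is `C_M > 0` with
`A (c(M+r)) ⊆ C_M • C(M)`.  It is a linear subspace of `V →L[ℝ] W`. -/
def TameCLM
    (hWballs : ∀ (r t : ℝ) (w : W), |t| ≤ 1 → dist w 0 < r → dist (t • w) 0 < r) :
    Submodule ℝ (V →L[ℝ] W) where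
  carrier := {A | ∃ r : ℕ, ∀ M : ℕ, ∃ C : ℝ, 0 < C ∧
    A '' cHull V (M + r) ⊆ C • cHull W M}
  zero_mem' := by
    refine ⟨0, fun M => ⟨1, one_pos, ?_⟩⟩
    rintro x ⟨v, hv, rfl⟩
    simp only [ContinuousLinearMap.zero_apply, one_smul]
    exact zero_mem_cHull M
  add_mem' := by
    rintro A B ⟨rA, hA⟩ ⟨rB, hB⟩
    refine ⟨max rA rB, fun M => ?_⟩
    obtain ⟨CA, hCA, hCA'⟩ := hA (M + (max rA rB - rA))
    obtain ⟨CB, hCB, hCB'⟩ := hB (M + (max rA rB - rB))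
    refine ⟨CA + CB, by positivity, ?_⟩
    rintro x ⟨v, hv, rfl⟩
    rw [(cHull_convex M).add_smul hCA.le hCB.le]
    have hvA : v ∈ cHull V (M + (max rA rB - rA) + rA) := by
      refine cHull_anti (by omega) hv
    have hvB : v ∈ cHull V (M + (max rA rB - rB) + rB) := by
      refine cHull_anti (by omega) hv
    have h1 : A v ∈ CA • cHull W M :=
      Set.smul_set_mono (cHull_anti (by omega)) (hCA' ⟨v, hvA, rfl⟩)
    have h2 : B v ∈ CB • cHull W M :=
      Set.smul_set_mono (cHull_anti (by omega)) (hCB' ⟨v, hvB, rfl⟩)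
    exact Set.add_mem_add h1 h2
  smul_mem' := by
    rintro a A ⟨r, hA⟩
    refine ⟨r, fun M => ?_⟩
    obtain ⟨C, hC, hC'⟩ := hA M
    refine ⟨(|a| + 1) * C, by positivity, ?_⟩
    rintro x ⟨v, hv, rfl⟩
    have h1 : A v ∈ C • cHull W M := hC' ⟨v, hv, rfl⟩
    obtain ⟨w, hw, hw'⟩ := h1
    have : (a • A) v = (a * C) • w := by
      simp [← hw', smul_smul]
    rw [this]
    refine (cHull_balanced hWballs M).smul_mono ?_ (Set.smul_mem_smul_set hw)
    simp only [Real.norm_eq_abs, abs_mul, abs_of_pos hC,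
      abs_of_pos (by positivity : (0:ℝ) < (|a| + 1) * C)]
    nlinarith [abs_nonneg a]

end TameCLM

open Filter Topology

-- A *string* in the sense of Adasch–Ernst–Keim, *Topological Vector Spaces*.
structure IsString {X : Type*} [AddCommGroup X] [Module ℝ X] (K : ℕ → Set X) : Prop where
  balanced : ∀ j, Balanced ℝ (K j)
  absorbent : ∀ j, Absorbent ℝ (K j)
  add_subset : ∀ j, K (j + 1) + K (j + 1) ⊆ K j

namespace IsString

variable {X : Type*} [AddCommGroup X] [Module ℝ X] {K : ℕ → Set X}

theorem zero_mem (hK : IsString K) (j : ℕ) : (0 : X) ∈ K j :=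
  (hK.absorbent j).zero_mem

theorem eventually_smul_mem (hK : IsString K) (j : ℕ) (x : X) :
    ∀ᶠ c in 𝓝 (0 : ℝ), c • x ∈ K j := by
  simpa using ((hK.absorbent j) x).eventually_nhds_zero (hK.zero_mem j)

theorem succ_subset (hK : IsString K) (j : ℕ) : K (j + 1) ⊆ K j := fun x hx =>
  hK.add_subset j (by simpa using Set.add_mem_add hx (hK.zero_mem (j + 1)))

theorem antitone (hK : IsString K) : Antitone K :=
  antitone_nat_of_succ_le hK.succ_subset

theorem pow_two_smul_subset (hK : IsString K) (j m : ℕ) : (2 : ℝ) ^ m • K (j + m) ⊆ K j := by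
  induction m generalizing j with
  | zero => simp
  | succ m ih =>
    rintro _ ⟨x, hx, rfl⟩
    have hx2 : (2 : ℝ) • x ∈ K (j + m) := by
      rw [two_smul]
      exact hK.add_subset (j + m) (Set.add_mem_add hx hx)
    change ((2 : ℝ) ^ m * 2) • x ∈ K j
    rw [mul_smul]
    exact ih j (Set.smul_mem_smul_set hx2)

theorem smul_subset_of_abs_le (hK : IsString K) {c : ℝ} {j m : ℕ} (hc : |c| ≤ 2 ^ m) :
    c • K (j + m) ⊆ K j :=
  ((hK.balanced _).smul_mono (by simpa using hc)).trans (hK.pow_two_smul_subset j m)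

def moduleFilterBasis (hK : IsString K) : ModuleFilterBasis ℝ X where
  sets := Set.range K
  nonempty := Set.range_nonempty K
  inter_sets := by
    rintro _ _ ⟨i, rfl⟩ ⟨j, rfl⟩
    exact ⟨K (max i j), ⟨_, rfl⟩,
      Set.subset_inter (hK.antitone (le_max_left i j)) (hK.antitone (le_max_right i j))⟩
  zero' := by
    rintro _ ⟨j, rfl⟩
    exact hK.zero_mem j
  add' := by
    rintro _ ⟨j, rfl⟩
    exact ⟨_, ⟨j + 1, rfl⟩, hK.add_subset j⟩
  neg' := by
    rintro _ ⟨j, rfl⟩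
    exact ⟨_, ⟨j, rfl⟩, fun x hx => by simpa using (hK.balanced j).neg_mem_iff.2 hx⟩
  conj' := by
    rintro x₀ _ ⟨j, rfl⟩
    exact ⟨_, ⟨j, rfl⟩, fun x hx => by simpa using hx⟩
  smul' := by
    rintro _ ⟨j, rfl⟩
    refine ⟨Metric.ball 0 1, Metric.ball_mem_nhds 0 one_pos, _, ⟨j, rfl⟩, ?_⟩
    rintro _ ⟨c, hc, x, hx, rfl⟩
    exact (hK.balanced j).smul_mem (by simpa using (Metric.mem_ball.1 hc).le) hx
  smul_left' := by
    rintro c _ ⟨j, rfl⟩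
    obtain ⟨m, hm⟩ := pow_unbounded_of_one_lt |c| one_lt_two
    exact ⟨_, ⟨j + m, rfl⟩,
      fun x hx => hK.smul_subset_of_abs_le hm.le (Set.smul_mem_smul_set hx)⟩
  smul_right' := by
    rintro x _ ⟨j, rfl⟩
    exact hK.eventually_smul_mem j x

theorem nhds_zero_hasBasis (hK : IsString K) :
    (@nhds X hK.moduleFilterBasis.topology 0).HasBasis (fun _ => True) K :=
  hK.moduleFilterBasis.toAddGroupFilterBasis.nhds_zero_hasBasis.to_hasBasis
    (fun _ ⟨j, hj⟩ => ⟨j, trivial, hj.le⟩) (fun j _ => ⟨K j, ⟨j, rfl⟩, subset_rfl⟩)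

theorem hasBasis_inv_pow_smul [TopologicalSpace X] (hK : IsString K)
    (h : (𝓝 (0 : X)).HasBasis (fun _ => True) K) :
    (𝓝 (0 : X)).HasBasis (fun _ : ℕ × ℕ => True) (fun p => ((2 : ℝ) ^ p.1)⁻¹ • K p.2) :=
  h.to_hasBasis (fun j _ => ⟨(0, j), trivial, by simp⟩) fun p _ =>
    ⟨p.2 + p.1, trivial, (Set.subset_smul_set_iff₀ (by positivity)).2
      (by simpa using hK.pow_two_smul_subset p.2 p.1)⟩

theorem t2Space (hK : IsString K) (hsep : ⋂ j, K j ⊆ {0}) :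
    @T2Space X hK.moduleFilterBasis.topology := by
  let _ := hK.moduleFilterBasis.topology
  rw [hK.moduleFilterBasis.toAddGroupFilterBasis.t2Space_iff_sInter_subset rfl]
  exact fun x hx => hsep (Set.mem_iInter.2 fun j => Set.mem_sInter.1 hx (K j) ⟨j, rfl⟩)

end IsString

theorem IsTopologicalAddGroup.metrizableSpace (X : Type*) [TopologicalSpace X] [AddCommGroup X]
    [IsTopologicalAddGroup X] [T0Space X] [(𝓝 (0 : X)).IsCountablyGenerated] :
    TopologicalSpace.MetrizableSpace X :=
  letI := IsTopologicalAddGroup.rightUniformSpace X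
  haveI := isUniformAddGroup_of_addCommGroup (G := X)
  haveI := IsUniformAddGroup.uniformity_countably_generated (α := X)
  UniformSpace.metrizableSpace

section CHull

variable {X : Type*} [AddCommGroup X] [Module ℝ X] [MetricSpace X]

theorem two_smul_ball_subset (htrans : ∀ x y z : X, dist (x + z) (y + z) = dist x y) (i : ℕ) :
    (2 : ℝ) • Metric.ball (0 : X) (2⁻¹ ^ (i + 1)) ⊆ Metric.ball 0 (2⁻¹ ^ i) := by
  rintro _ ⟨v, hv, rfl⟩
  rw [Metric.mem_ball] at hv ⊢
  have h2v : dist ((2 : ℝ) • v) v = dist v 0 := by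
    rw [two_smul, ← htrans v 0 v, zero_add]
  calc dist ((2 : ℝ) • v) 0 ≤ dist ((2 : ℝ) • v) v + dist v 0 := dist_triangle _ _ _
    _ < 2⁻¹ ^ (i + 1) + 2⁻¹ ^ (i + 1) := by rw [h2v]; linarith
    _ = 2⁻¹ ^ i := by ring

variable [IsTopologicalAddGroup X] [ContinuousSMul ℝ X]

theorem two_smul_cHull_succ_subset (htrans : ∀ x y z : X, dist (x + z) (y + z) = dist x y)
    (i : ℕ) : (2 : ℝ) • cHull X (i + 1) ⊆ cHull X i := by
  refine (image_closure_subset_closure_image (continuous_const_smul (2 : ℝ))).trans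
    (closure_mono ?_)
  rw [Set.image_smul, ← convexHull_smul]
  exact convexHull_mono (two_smul_ball_subset htrans i)

theorem antitone_pow_smul_cHull (htrans : ∀ x y z : X, dist (x + z) (y + z) = dist x y) :
    Antitone fun i => (2 : ℝ) ^ i • cHull X i := by
  refine antitone_nat_of_succ_le fun i => ?_
  rw [pow_succ, mul_smul]
  exact Set.smul_set_mono (two_smul_cHull_succ_subset htrans i)

theorem cHull_succ_add_subset (htrans : ∀ x y z : X, dist (x + z) (y + z) = dist x y) (j : ℕ) :
    cHull X (j + 1) + cHull X (j + 1) ⊆ cHull X j := by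
  rintro _ ⟨a, ha, b, hb, rfl⟩
  have hmid : (2⁻¹ : ℝ) • a + (2⁻¹ : ℝ) • b ∈ cHull X (j + 1) :=
    cHull_convex (j + 1) ha hb (by norm_num) (by norm_num) (by norm_num)
  exact two_smul_cHull_succ_subset htrans j ⟨_, hmid, by module⟩

theorem exists_cHull_subset_closedBall [LocallyConvexSpace ℝ X] {ε : ℝ} (hε : 0 < ε) :
    ∃ j, cHull X j ⊆ Metric.closedBall 0 ε := by
  obtain ⟨S, ⟨hS, hSconv⟩, hSball⟩ :=
    (LocallyConvexSpace.convex_basis_zero ℝ X).mem_iff.1 (Metric.ball_mem_nhds (0 : X) hε)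
  obtain ⟨δ, hδ, hδS⟩ := Metric.mem_nhds_iff.1 hS
  obtain ⟨j, hj⟩ := exists_pow_lt_of_lt_one hδ (by norm_num : (2⁻¹ : ℝ) < 1)
  refine ⟨j, (closure_mono ?_).trans Metric.closure_ball_subset_closedBall⟩
  exact convexHull_min ((Metric.ball_subset_ball hj.le).trans hδS) hSconv |>.trans hSball

theorem exists_smul_mem_pow_smul_cHull {v : X}
    (hv : ∃ C : ℝ, ∀ r : ℝ, 0 < r → dist (r • v) 0 ≤ C * r) :
    ∃ ε : ℝ, 0 < ε ∧ ∀ i : ℕ, ε • v ∈ (2 : ℝ) ^ i • cHull X i := by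
  obtain ⟨C, hC⟩ := hv
  refine ⟨(|C| + 1)⁻¹, by positivity, fun i => ?_⟩
  set ε := (|C| + 1)⁻¹
  have hball : (2⁻¹ ^ i * ε) • v ∈ Metric.ball (0 : X) (2⁻¹ ^ i) := by
    have hCε : C * ε < 1 := by
      rw [← div_eq_mul_inv, div_lt_one (by positivity)]
      linarith [le_abs_self C]
    rw [Metric.mem_ball]
    calc dist ((2⁻¹ ^ i * ε) • v) 0 ≤ C * (2⁻¹ ^ i * ε) := hC _ (by positivity)
      _ = 2⁻¹ ^ i * (C * ε) := by ring
      _ < 2⁻¹ ^ i := mul_lt_of_lt_one_right (by positivity) hCε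
  refine ⟨_, subset_closure (subset_convexHull ℝ _ hball), ?_⟩
  change (2 : ℝ) ^ i • (2⁻¹ ^ i * ε) • v = ε • v
  rw [smul_smul, ← mul_assoc, inv_pow, mul_inv_cancel₀ (by positivity), one_mul]

end CHull

section MapsIntoCHull

variable (V W : Type*)
  [AddCommGroup V] [Module ℝ V] [MetricSpace V] [IsTopologicalAddGroup V] [ContinuousSMul ℝ V]
  [AddCommGroup W] [Module ℝ W] [MetricSpace W] [IsTopologicalAddGroup W] [ContinuousSMul ℝ W]

-- The paper's `K_j = ⋃ i, K_{i,j}`.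
def mapsIntoCHull (j : ℕ) : Set (V →L[ℝ] W) :=
  ⋃ i : ℕ, {A | A '' ((2 : ℝ) ^ i • cHull V i) ⊆ cHull W j}

variable {V W}

theorem balanced_mapsIntoCHull
    (hWballs : ∀ (r t : ℝ) (w : W), |t| ≤ 1 → dist w 0 < r → dist (t • w) 0 < r) (j : ℕ) :
    Balanced ℝ (mapsIntoCHull V W j) := by
  rintro a ha _ ⟨A, hA, rfl⟩
  obtain ⟨i, hAi⟩ := Set.mem_iUnion.1 hA
  refine Set.mem_iUnion.2 ⟨i, ?_⟩
  rintro _ ⟨v, hv, rfl⟩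
  exact (cHull_balanced hWballs j).smul_mem ha (hAi ⟨v, hv, rfl⟩)

theorem mapsIntoCHull_succ_add_subset
    (hVtrans : ∀ x y z : V, dist (x + z) (y + z) = dist x y)
    (hWtrans : ∀ x y z : W, dist (x + z) (y + z) = dist x y) (j : ℕ) :
    mapsIntoCHull V W (j + 1) + mapsIntoCHull V W (j + 1) ⊆ mapsIntoCHull V W j := by
  rintro _ ⟨A, hA, B, hB, rfl⟩
  obtain ⟨iA, hAi⟩ := Set.mem_iUnion.1 hA
  obtain ⟨iB, hBi⟩ := Set.mem_iUnion.1 hB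
  refine Set.mem_iUnion.2 ⟨max iA iB, ?_⟩
  rintro _ ⟨v, hv, rfl⟩
  have hvA := antitone_pow_smul_cHull hVtrans (le_max_left iA iB) hv
  have hvB := antitone_pow_smul_cHull hVtrans (le_max_right iA iB) hv
  exact cHull_succ_add_subset hWtrans j
    (Set.add_mem_add (hAi ⟨v, hvA, rfl⟩) (hBi ⟨v, hvB, rfl⟩))

theorem eventually_smul_mem_mapsIntoCHull
    {hWballs : ∀ (r t : ℝ) (w : W), |t| ≤ 1 → dist w 0 < r → dist (t • w) 0 < r}
    {A : V →L[ℝ] W} (hA : A ∈ TameCLM V W hWballs) (j : ℕ) :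
    ∀ᶠ c in 𝓝 (0 : ℝ), c • A ∈ mapsIntoCHull V W j := by
  obtain ⟨r, hr⟩ := hA
  obtain ⟨C, hC, hAC⟩ := hr j
  have hR : (0 : ℝ) < 2 ^ (j + r) * C := by positivity
  filter_upwards [Metric.closedBall_mem_nhds (0 : ℝ) (inv_pos.2 hR)] with c hc
  rw [Metric.mem_closedBall, Real.dist_eq, sub_zero] at hc
  refine Set.mem_iUnion.2 ⟨j + r, ?_⟩
  rintro _ ⟨_, ⟨u, hu, rfl⟩, rfl⟩
  obtain ⟨w, hw, hAu⟩ := hAC ⟨u, hu, rfl⟩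
  have hcA : (c • A) ((2 : ℝ) ^ (j + r) • u) = (c * (2 ^ (j + r) * C)) • w := by
    rw [smul_apply, map_smul, ← hAu, smul_smul, smul_smul, mul_assoc]
  rw [hcA]
  refine (cHull_balanced hWballs j).smul_mem ?_ hw
  rw [Real.norm_eq_abs, abs_mul, abs_of_pos hR]
  exact (mul_le_mul_of_nonneg_right hc hR.le).trans_eq (inv_mul_cancel₀ hR.ne')

theorem exists_notMem_mapsIntoCHull [LocallyConvexSpace ℝ W]
    (hVstrict : ∀ v : V, ∃ C : ℝ, ∀ r : ℝ, 0 < r → dist (r • v) 0 ≤ C * r)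
    {A : V →L[ℝ] W} (hA : A ≠ 0) : ∃ j, A ∉ mapsIntoCHull V W j := by
  obtain ⟨v, hAv⟩ : ∃ v, A v ≠ 0 := by
    by_contra! h
    exact hA (ContinuousLinearMap.ext h)
  obtain ⟨ε, hε, hεv⟩ := exists_smul_mem_pow_smul_cHull (hVstrict v)
  have hεAv : dist (A (ε • v)) 0 > 0 := by
    rw [map_smul]
    exact dist_pos.2 (smul_ne_zero hε.ne' hAv)
  obtain ⟨j, hj⟩ := exists_cHull_subset_closedBall (X := W) (half_pos hεAv)
  refine ⟨j, fun hAj => ?_⟩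
  obtain ⟨i, hAi⟩ := Set.mem_iUnion.1 hAj
  have := Metric.mem_closedBall.1 (hj (hAi ⟨_, hεv i, rfl⟩))
  linarith

end MapsIntoCHull

theorem isString_preimage_mapsIntoCHull {V W : Type*}
    [AddCommGroup V] [Module ℝ V] [MetricSpace V] [IsTopologicalAddGroup V] [ContinuousSMul ℝ V]
    [AddCommGroup W] [Module ℝ W] [MetricSpace W] [IsTopologicalAddGroup W] [ContinuousSMul ℝ W]
    (hVtrans : ∀ x y z : V, dist (x + z) (y + z) = dist x y)
    (hWtrans : ∀ x y z : W, dist (x + z) (y + z) = dist x y)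
    (hWballs : ∀ (r t : ℝ) (w : W), |t| ≤ 1 → dist w 0 < r → dist (t • w) 0 < r) :
    IsString fun j => (TameCLM V W hWballs).subtype ⁻¹' mapsIntoCHull V W j where
  balanced j :=
    (balanced_mapsIntoCHull hWballs j).mulActionHom_preimage
      (TameCLM V W hWballs).subtype.toMulActionHom
  absorbent j := absorbent_iff_eventually_nhdsNE_zero.2 fun A =>
    (eventually_smul_mem_mapsIntoCHull A.2 j).filter_mono nhdsWithin_le_nhds
  add_subset j := (Set.preimage_add_preimage_subset _).trans
    (Set.preimage_mono (mapsIntoCHull_succ_add_subset hVtrans hWtrans j))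

theorem stmt16_general (V W : Type*)
    [AddCommGroup V] [Module ℝ V] [MetricSpace V] [IsTopologicalAddGroup V]
    [ContinuousSMul ℝ V]
    [AddCommGroup W] [Module ℝ W] [MetricSpace W] [IsTopologicalAddGroup W]
    [ContinuousSMul ℝ W] [LocallyConvexSpace ℝ W]
    (hVtrans : ∀ x y z : V, dist (x + z) (y + z) = dist x y)
    (hWtrans : ∀ x y z : W, dist (x + z) (y + z) = dist x y)
    (hWballs : ∀ (r t : ℝ) (w : W), |t| ≤ 1 → dist w 0 < r → dist (t • w) 0 < r)
    (hVstrict : ∀ v : V, ∃ C : ℝ, ∀ r : ℝ, 0 < r → dist (r • v) 0 ≤ C * r) :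
    ∃ t : TopologicalSpace (TameCLM V W hWballs),
      @IsTopologicalAddGroup (TameCLM V W hWballs) t _ ∧
      @ContinuousSMul ℝ (TameCLM V W hWballs) _ _ t ∧
      @T2Space (TameCLM V W hWballs) t ∧
      @TopologicalSpace.MetrizableSpace (TameCLM V W hWballs) t ∧
      (@nhds (TameCLM V W hWballs) t 0).HasBasis (fun _ : ℕ × ℕ => True)
        (fun p => ((2:ℝ) ^ p.1)⁻¹ •
          ⋃ i : ℕ, {A : TameCLM V W hWballs |
            (A : V →L[ℝ] W) '' (((2:ℝ) ^ i) • cHull V i) ⊆ cHull W p.2}) := by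
  have hK := isString_preimage_mapsIntoCHull hVtrans hWtrans hWballs
  let B := hK.moduleFilterBasis
  let _ := B.topology
  have hbasis := hK.nhds_zero_hasBasis
  have hsep : ⋂ j, (TameCLM V W hWballs).subtype ⁻¹' mapsIntoCHull V W j ⊆ {0} := by
    intro A hA
    by_contra hA0
    obtain ⟨j, hj⟩ := exists_notMem_mapsIntoCHull hVstrict (Subtype.coe_ne_coe.2 hA0)
    exact hj (Set.mem_iInter.1 hA j)
  have : IsTopologicalAddGroup (TameCLM V W hWballs) :=
    B.toAddGroupFilterBasis.isTopologicalAddGroup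
  have := hK.t2Space hsep
  have := hbasis.isCountablyGenerated
  refine ⟨_, inferInstance, B.continuousSMul, inferInstance,
    IsTopologicalAddGroup.metrizableSpace _, ?_⟩
  simpa only [mapsIntoCHull, Set.preimage_iUnion, Set.preimage_ofPred_eq, Submodule.coe_subtype]
    using hK.hasBasis_inv_pow_smul hbasis

/-- Let `V`, `W` be locally convex real tvs whose topologies come from
translation-invariant metrics with balanced balls, `V` strict.  On the space
`TL(V,W)` of tame continuous linear maps, the sets `2⁻ⁿ • K_j`, where
`K_j = ⋃ i K_{i,j}` and `K_{i,j} = {A | A (2ⁱ • c(i)) ⊆ C(j)}`, form a neighborhood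
base at `0` of a Hausdorff, metrizable vector space topology. -/
theorem stmt16 (V W : Type*)
    [AddCommGroup V] [Module ℝ V] [MetricSpace V] [IsTopologicalAddGroup V]
    [ContinuousSMul ℝ V] [LocallyConvexSpace ℝ V]
    [AddCommGroup W] [Module ℝ W] [MetricSpace W] [IsTopologicalAddGroup W]
    [ContinuousSMul ℝ W] [LocallyConvexSpace ℝ W]
    (hVtrans : ∀ x y z : V, dist (x + z) (y + z) = dist x y)
    (hVballs : ∀ (r t : ℝ) (v : V), |t| ≤ 1 → dist v 0 < r → dist (t • v) 0 < r)
    (hWtrans : ∀ x y z : W, dist (x + z) (y + z) = dist x y)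
    (hWballs : ∀ (r t : ℝ) (w : W), |t| ≤ 1 → dist w 0 < r → dist (t • w) 0 < r)
    (hVstrict : ∀ v : V, ∃ C : ℝ, ∀ r : ℝ, 0 < r → dist (r • v) 0 ≤ C * r) :
    ∃ t : TopologicalSpace (TameCLM V W hWballs),
      @IsTopologicalAddGroup (TameCLM V W hWballs) t _ ∧
      @ContinuousSMul ℝ (TameCLM V W hWballs) _ _ t ∧
      @T2Space (TameCLM V W hWballs) t ∧
      @TopologicalSpace.MetrizableSpace (TameCLM V W hWballs) t ∧
      (@nhds (TameCLM V W hWballs) t 0).HasBasis (fun _ : ℕ × ℕ => True)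
        (fun p => ((2:ℝ) ^ p.1)⁻¹ •
          ⋃ i : ℕ, {A : TameCLM V W hWballs |
            (A : V →L[ℝ] W) '' (((2:ℝ) ^ i) • cHull V i) ⊆ cHull W p.2}) :=
  stmt16_general V W hVtrans hWtrans hWballs hVstrict
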